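/- Fix an integer n ≥ 2 and let A be a Banach algebra. Then for all a, b ∈ A the element aⁿ − bⁿ lies in 𝒫ₙ(A) and satisfies ‖aⁿ − bⁿ‖_{𝒫ₙ} ≤ (nⁿ/n!) Σ_{j=1}^{n} C(n, j) ‖b‖^{n−j} ‖a − b‖^{j}, where C(n, j) is the binomial coefficient. In particular, the map a ↦ aⁿ from A to (𝒫ₙ(A), ‖·‖_{𝒫ₙ}) is continuous. -/

import Mathlib

/- Statement 16: In a Banach algebra `A`, for all `a b : A` the element `aⁿ − bⁿ` lies in
`𝒫ₙ(A)` and `‖aⁿ − bⁿ‖_{𝒫ₙ} ≤ (nⁿ/n!) Σ_{j=1}^{n} C(n,j) ‖b‖^{n−j} ‖a−b‖^{j}`; in particular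
`a ↦ aⁿ` is continuous from `A` to `(𝒫ₙ(A), ‖·‖_{𝒫ₙ})`. -/

noncomputable section

/-- `npow1 mul a k = a^(k+1)` (products with respect to the multiplication `mul`). -/
def npow1 {A : Type*} (mul : A → A → A) (a : A) : ℕ → A
  | 0 => a
  | k + 1 => mul a (npow1 mul a k)

/-- `npower mul a n = aⁿ` for `n ≥ 1` (junk value `a` for `n = 0`). -/
def npower {A : Type*} (mul : A → A → A) (a : A) (n : ℕ) : A :=
  npow1 mul a (n - 1)

/-- `𝒫ₙ(A)`: the linear span of the set of n-th powers of elements of `A`. -/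
def PnSubmodule {A : Type*} [AddCommGroup A] [Module ℂ A] (mul : A → A → A) (n : ℕ) :
    Submodule ℂ A :=
  Submodule.span ℂ {x : A | ∃ a : A, x = npower mul a n}

/-- The norm `‖·‖_{𝒫ₙ}` on `𝒫ₙ(A)`. -/
def PnNorm {A : Type*} [NormedAddCommGroup A] (mul : A → A → A) (n : ℕ) (a : A) : ℝ :=
  sInf {r : ℝ | ∃ (m : ℕ) (c : Fin m → A),
    a = ∑ j, npower mul (c j) n ∧ r = ∑ j, ‖c j‖ ^ n}

/-!
Put `h = a - b` and let `T_j` be the sum of the words of length `n` in `b` and `h` containing `h`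
exactly `j` times, so that `aⁿ - bⁿ = T_1 + ⋯ + T_n` and `T_n = hⁿ`. For `1 ≤ j < n` and a
primitive `n`-th root of unity `ζ`, averaging with the weights `ζ^{k(n-j)}` isolates `T_j`:
`∑ₖ ζ^{k(n-j)} (b + s ζᵏ h)ⁿ = n sʲ T_j` for every scalar `s`. As complex scalars have `n`-th
roots, this writes `T_j` as a sum of `n` n-th powers of total cost `(‖b‖ + s‖h‖)ⁿ / sʲ`; the choice
`s = j‖b‖ / ((n - j)‖h‖)` together with `j! (n-j)! ≤ jʲ (n-j)^{n-j}` bounds this cost by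
`(nⁿ/n!) C(n,j) ‖b‖^{n-j} ‖h‖ʲ`.
-/

open Finset

theorem Nat.factorial_add_le_choose_mul_pow_mul_pow (j p : ℕ) :
    (j + p).factorial ≤ (j + p).choose j * j ^ j * p ^ p := by
  rw [← Nat.choose_mul_factorial_mul_factorial (Nat.le_add_right j p), Nat.add_sub_cancel_left,
    mul_assoc, mul_assoc]
  exact Nat.mul_le_mul_left _ (Nat.mul_le_mul (Nat.factorial_le_pow j) (Nat.factorial_le_pow p))

lemma add_mul_pow_div_pow_le {X Y : ℝ} (hX : 0 < X) (hY : 0 < Y) {j p : ℕ} (hj : 1 ≤ j)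
    (hp : 1 ≤ p) :
    (X + j * X / (p * Y) * Y) ^ (j + p) / (j * X / (p * Y)) ^ j ≤
      ((j + p : ℕ) : ℝ) ^ (j + p) / (j + p).factorial * ((j + p).choose j * X ^ p * Y ^ j) := by
  have hj' : (0 : ℝ) < j := by exact_mod_cast hj
  have hp' : (0 : ℝ) < p := by exact_mod_cast hp
  have hfac : ((j + p).factorial : ℝ) ≤ (j + p).choose j * j ^ j * p ^ p := by
    exact_mod_cast Nat.factorial_add_le_choose_mul_pow_mul_pow j p
  have hlhs : (X + j * X / (p * Y) * Y) ^ (j + p) / (j * X / (p * Y)) ^ j =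
      ((j + p : ℕ) : ℝ) ^ (j + p) * (X ^ p * Y ^ j) / (j ^ j * p ^ p) := by
    have hsum : X + j * X / (p * Y) * Y = X * (j + p) / p := by
      field_simp
      ring
    rw [hsum, div_pow, div_pow, mul_pow, mul_pow, mul_pow]
    push_cast
    field_simp
    ring
  rw [hlhs, div_mul_eq_mul_div, div_le_div_iff₀ (by positivity) (by positivity)]
  calc ((j + p : ℕ) : ℝ) ^ (j + p) * (X ^ p * Y ^ j) * (j + p).factorial
      ≤ ((j + p : ℕ) : ℝ) ^ (j + p) * (X ^ p * Y ^ j) * ((j + p).choose j * j ^ j * p ^ p) := by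
        gcongr
    _ = _ := by ring

lemma IsPrimitiveRoot.sum_pow_mul_eq_ite {K : Type*} [Field K] {ζ : K} {n : ℕ}
    (hζ : IsPrimitiveRoot ζ n) (m : ℕ) :
    ∑ k ∈ range n, ζ ^ (k * m) = if n ∣ m then (n : K) else 0 := by
  simp only [mul_comm _ m, pow_mul]
  split_ifs with hdvd
  · simp [(hζ.pow_eq_one_iff_dvd m).2 hdvd]
  · have hne : ζ ^ m ≠ 1 := fun h => hdvd ((hζ.pow_eq_one_iff_dvd m).1 h)
    rw [geom_sum_eq hne, ← pow_mul, mul_comm, pow_mul, hζ.pow_eq_one, one_pow, sub_self,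
      zero_div]

section Powers

variable {R A : Type*} [CommSemiring R] [NonUnitalNonAssocSemiring A] [Module R A]
  [IsScalarTower R A A] [SMulCommClass R A A]

lemma npow1_smul (c : R) (x : A) : ∀ k, npow1 (· * ·) (c • x) k = c ^ (k + 1) • npow1 (· * ·) x k
  | 0 => by simp [npow1]
  | k + 1 => by
    simp only [npow1, npow1_smul c x k, smul_mul_assoc, mul_smul_comm, smul_smul, ← pow_succ]

lemma npower_smul (c : R) (x : A) {n : ℕ} (hn : 1 ≤ n) :
    npower (· * ·) (c • x) n = c ^ n • npower (· * ·) x n := by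
  rw [npower, npow1_smul, Nat.sub_add_cancel hn, npower]

/-- `powCoeff b h k j` is the coefficient of `uʲ` in `(b + u h)^(k+1)`, i.e. the sum of the
words of length `k + 1` in `b` and `h` containing `h` exactly `j` times. -/
def powCoeff (b h : A) : ℕ → ℕ → A
  | 0, 0 => b
  | 0, 1 => h
  | 0, _ + 2 => 0
  | k + 1, 0 => b * powCoeff b h k 0
  | k + 1, j + 1 => b * powCoeff b h k (j + 1) + h * powCoeff b h k j

variable (b h : A)

lemma powCoeff_eq_zero_of_lt : ∀ k j, k + 1 < j → powCoeff b h k j = 0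
  | 0, j + 2, _ => rfl
  | k + 1, j + 1, hj => by
    simp [powCoeff, powCoeff_eq_zero_of_lt k (j + 1) (by omega),
      powCoeff_eq_zero_of_lt k j (by omega)]

lemma powCoeff_zero_right_eq_npow1 : ∀ k, powCoeff b h k 0 = npow1 (· * ·) b k
  | 0 => rfl
  | k + 1 => by simp [powCoeff, npow1, powCoeff_zero_right_eq_npow1 k]

lemma powCoeff_succ_self : ∀ k, powCoeff b h k (k + 1) = npow1 (· * ·) h k
  | 0 => rfl
  | k + 1 => by
    simp [powCoeff, npow1, powCoeff_succ_self k, powCoeff_eq_zero_of_lt b h k (k + 2) (by omega)]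

lemma powCoeff_zero_left_of_le : ∀ k j, j ≤ k → powCoeff 0 h k j = 0
  | 0, 0, _ => rfl
  | k + 1, 0, _ => by simp [powCoeff]
  | k + 1, j + 1, hj => by simp [powCoeff, powCoeff_zero_left_of_le k j (by omega)]

lemma powCoeff_zero_of_pos : ∀ k j, 0 < j → powCoeff b 0 k j = 0
  | 0, 1, _ => rfl
  | 0, _ + 2, _ => rfl
  | k + 1, j + 1, _ => by
    simp [powCoeff, powCoeff_zero_of_pos k (j + 1) (by omega)]

lemma npow1_add_smul (u : R) : ∀ k,
    npow1 (· * ·) (b + u • h) k = ∑ j ∈ range (k + 2), u ^ j • powCoeff b h k j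
  | 0 => by simp [npow1, powCoeff, Finset.sum_range_succ]
  | k + 1 => by
    have hlast : ∑ j ∈ range (k + 2), u ^ j • powCoeff b h k j =
        ∑ j ∈ range (k + 3), u ^ j • powCoeff b h k j := by
      simp [Finset.sum_range_succ _ (k + 2), powCoeff_eq_zero_of_lt b h k (k + 2) (by omega)]
    rw [npow1, npow1_add_smul u k, add_mul, Finset.sum_range_succ' _ (k + 2)]
    nth_rewrite 1 [hlast]
    rw [Finset.sum_range_succ']
    simp only [powCoeff, mul_add, Finset.mul_sum, smul_add, Finset.sum_add_distrib, mul_smul_comm,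
      smul_mul_assoc, smul_smul, ← pow_succ]
    abel

end Powers

section RootsOfUnity

variable {A : Type*} [NonUnitalNonAssocSemiring A] [Module ℂ A] [IsScalarTower ℂ A A]
  [SMulCommClass ℂ A A]

lemma sum_primitiveRoot_smul_npower {ζ : ℂ} {n j : ℕ} (hζ : IsPrimitiveRoot ζ n) (hj : 1 ≤ j)
    (hjn : j < n) (b h : A) (s : ℂ) :
    ∑ k ∈ range n, ζ ^ (k * (n - j)) • npower (· * ·) (b + (s * ζ ^ k) • h) n =
      ((n : ℂ) * s ^ j) • powCoeff b h (n - 1) j := by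
  have hn : n - 1 + 2 = n + 1 := by omega
  calc ∑ k ∈ range n, ζ ^ (k * (n - j)) • npower (· * ·) (b + (s * ζ ^ k) • h) n
      = ∑ i ∈ range (n + 1), (s ^ i * ∑ k ∈ range n, ζ ^ (k * (n - j + i))) •
          powCoeff b h (n - 1) i := by
        simp only [npower, npow1_add_smul, hn, Finset.smul_sum, Finset.mul_sum, Finset.sum_smul,
          smul_smul]
        rw [Finset.sum_comm]
        refine Finset.sum_congr rfl fun i _ => Finset.sum_congr rfl fun k _ => ?_
        rw [mul_pow, ← pow_mul, mul_add, pow_add]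
        ring_nf
    _ = ((n : ℂ) * s ^ j) • powCoeff b h (n - 1) j := by
        rw [Finset.sum_eq_single_of_mem j (Finset.mem_range.2 (by omega))]
        · rw [hζ.sum_pow_mul_eq_ite, if_pos (by rw [Nat.sub_add_cancel hjn.le]), mul_comm]
        · intro i hi hij
          have hi : i < n + 1 := Finset.mem_range.1 hi
          -- `n - j + i` lies strictly between `0` and `2n`, and equals `n` only for `i = j`
          have hndvd : ¬ n ∣ n - j + i := by
            rintro ⟨_ | _ | c, hc⟩ <;> simp only [mul_add, mul_one, mul_zero] at hc <;> omega
          rw [hζ.sum_pow_mul_eq_ite, if_neg hndvd, mul_zero, zero_smul]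

end RootsOfUnity

section PowSumRepr

variable {A : Type*} [NormedAddCommGroup A] (mul : A → A → A) (n : ℕ)

def HasPowSumRepr (z : A) (r : ℝ) : Prop :=
  ∃ (m : ℕ) (x : Fin m → A), z = ∑ i, npower mul (x i) n ∧ ∑ i, ‖x i‖ ^ n ≤ r

variable {mul n}

lemma HasPowSumRepr.mem_PnSubmodule [Module ℂ A] {z : A} {r : ℝ} (hz : HasPowSumRepr mul n z r) :
    z ∈ PnSubmodule mul n := by
  obtain ⟨m, x, rfl, -⟩ := hz
  exact Submodule.sum_mem _ fun i _ => Submodule.subset_span ⟨x i, rfl⟩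

lemma HasPowSumRepr.PnNorm_le {z : A} {r : ℝ} (hz : HasPowSumRepr mul n z r) :
    PnNorm mul n z ≤ r := by
  obtain ⟨m, x, hzx, hr⟩ := hz
  have hbdd : BddBelow {r : ℝ | ∃ (m : ℕ) (y : Fin m → A),
      z = ∑ i, npower mul (y i) n ∧ r = ∑ i, ‖y i‖ ^ n} := by
    refine ⟨0, ?_⟩
    rintro _ ⟨m, y, -, rfl⟩
    positivity
  exact (csInf_le hbdd ⟨m, x, hzx, rfl⟩).trans hr

lemma HasPowSumRepr.mono {z : A} {r r' : ℝ} (hz : HasPowSumRepr mul n z r) (hr : r ≤ r') :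
    HasPowSumRepr mul n z r' :=
  let ⟨m, x, hzx, hxr⟩ := hz
  ⟨m, x, hzx, hxr.trans hr⟩

lemma hasPowSumRepr_zero : HasPowSumRepr mul n 0 0 :=
  ⟨0, Fin.elim0, by simp, by simp⟩

lemma hasPowSumRepr_npower (x : A) : HasPowSumRepr mul n (npower mul x n) (‖x‖ ^ n) :=
  ⟨1, fun _ => x, by simp, by simp⟩

lemma HasPowSumRepr.add {y z : A} {r s : ℝ} (hy : HasPowSumRepr mul n y r)
    (hz : HasPowSumRepr mul n z s) : HasPowSumRepr mul n (y + z) (r + s) := by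
  obtain ⟨m, x, rfl, hxr⟩ := hy
  obtain ⟨m', x', rfl, hxs⟩ := hz
  refine ⟨m + m', Fin.append x x', ?_, ?_⟩ <;> simp only [Fin.sum_univ_add, Fin.append_left,
    Fin.append_right]
  exact add_le_add hxr hxs

lemma HasPowSumRepr.sum {ι : Type*} {s : Finset ι} {z : ι → A} {r : ι → ℝ}
    (hz : ∀ i ∈ s, HasPowSumRepr mul n (z i) (r i)) :
    HasPowSumRepr mul n (∑ i ∈ s, z i) (∑ i ∈ s, r i) := by
  classical
  induction s using Finset.induction_on with
  | empty => simpa using hasPowSumRepr_zero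
  | insert i s hi ih =>
    rw [Finset.sum_insert hi, Finset.sum_insert hi]
    exact (hz i (Finset.mem_insert_self i s)).add
      (ih fun k hk => hz k (Finset.mem_insert_of_mem hk))

end PowSumRepr

section Algebra

variable {A : Type*} [NonUnitalNormedRing A] [NormedSpace ℂ A] [IsScalarTower ℂ A A]
  [SMulCommClass ℂ A A]

/-- Every complex scalar is an `n`-th power, so `c • xⁿ = (d • x)ⁿ` with `dⁿ = c`. -/
lemma hasPowSumRepr_smul_npower {n : ℕ} (hn : 1 ≤ n) (c : ℂ) (x : A) :
    HasPowSumRepr (· * ·) n (c • npower (· * ·) x n) (‖c‖ * ‖x‖ ^ n) := by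
  obtain ⟨d, rfl⟩ := IsAlgClosed.exists_pow_nat_eq c hn
  rw [← npower_smul d x hn, norm_pow, ← mul_pow, ← norm_smul]
  exact hasPowSumRepr_npower (d • x)

end Algebra

section Estimate

variable {A : Type*} [NonUnitalNormedRing A] [NormedSpace ℂ A] [IsScalarTower ℂ A A]
  [SMulCommClass ℂ A A]

lemma hasPowSumRepr_powCoeff_of_pos {n j : ℕ} (hj : 1 ≤ j) (hjn : j < n) (b h : A) {s : ℝ}
    (hs : 0 < s) :
    HasPowSumRepr (· * ·) n (powCoeff b h (n - 1) j) ((‖b‖ + s * ‖h‖) ^ n / s ^ j) := by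
  set ζ := Complex.exp (2 * Real.pi * Complex.I / n)
  have hζ : IsPrimitiveRoot ζ n := Complex.isPrimitiveRoot_exp n (by omega)
  have hD : (n : ℂ) * (s : ℂ) ^ j ≠ 0 :=
    mul_ne_zero (Nat.cast_ne_zero.2 (by omega)) (pow_ne_zero _ (Complex.ofReal_ne_zero.2 hs.ne'))
  have hT : powCoeff b h (n - 1) j = ∑ k ∈ range n,
      (((n : ℂ) * (s : ℂ) ^ j)⁻¹ * ζ ^ (k * (n - j))) • npower (· * ·) (b + (s * ζ ^ k) • h) n := by
    calc powCoeff b h (n - 1) j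
        = (((n : ℂ) * (s : ℂ) ^ j)⁻¹ * ((n : ℂ) * (s : ℂ) ^ j)) • powCoeff b h (n - 1) j := by
          rw [inv_mul_cancel₀ hD, one_smul]
      _ = _ := by
          rw [mul_smul, ← sum_primitiveRoot_smul_npower hζ hj hjn, smul_sum]
          simp_rw [smul_smul]
  have hcost : (‖b‖ + s * ‖h‖) ^ n / s ^ j =
      ∑ k ∈ range n, ((n : ℝ) * s ^ j)⁻¹ * (‖b‖ + s * ‖h‖) ^ n := by
    have : (n : ℝ) ≠ 0 := Nat.cast_ne_zero.2 (by omega)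
    rw [sum_const, card_range, nsmul_eq_mul]
    field_simp
  rw [hT, hcost]
  refine HasPowSumRepr.sum fun k _ => (hasPowSumRepr_smul_npower (by omega) _ _).mono ?_
  have hζk : ‖ζ‖ ^ k = 1 := by rw [hζ.norm'_eq_one (by omega), one_pow]
  have hcoeff : ‖((n : ℂ) * (s : ℂ) ^ j)⁻¹ * ζ ^ (k * (n - j))‖ = ((n : ℝ) * s ^ j)⁻¹ := by
    simp [hζ.norm'_eq_one (by omega : n ≠ 0), abs_of_pos hs]
  have hbase : ‖b + ((s : ℂ) * ζ ^ k) • h‖ ≤ ‖b‖ + s * ‖h‖ := by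
    refine (norm_add_le _ _).trans_eq ?_
    rw [norm_smul, norm_mul, norm_pow, hζk, mul_one, Complex.norm_real, Real.norm_of_nonneg hs.le]
  rw [hcoeff]
  gcongr

lemma hasPowSumRepr_powCoeff {n j : ℕ} (hj : 1 ≤ j) (hjn : j < n) (b h : A) :
    HasPowSumRepr (· * ·) n (powCoeff b h (n - 1) j)
      ((n : ℝ) ^ n / n.factorial * (n.choose j * ‖b‖ ^ (n - j) * ‖h‖ ^ j)) := by
  rcases eq_or_ne b 0 with rfl | hb
  · rw [powCoeff_zero_left_of_le h _ _ (by omega)]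
    exact hasPowSumRepr_zero.mono (by positivity)
  rcases eq_or_ne h 0 with rfl | hh
  · rw [powCoeff_zero_of_pos b _ _ (by omega)]
    exact hasPowSumRepr_zero.mono (by positivity)
  have hbound := add_mul_pow_div_pow_le (norm_pos_iff.2 hb) (norm_pos_iff.2 hh) hj
    (p := n - j) (by omega)
  rw [Nat.add_sub_cancel' hjn.le] at hbound
  have hs : 0 < j * ‖b‖ / ((n - j : ℕ) * ‖h‖) := by
    have : 0 < n - j := by omega
    positivity
  exact (hasPowSumRepr_powCoeff_of_pos hj hjn b h hs).mono hbound

lemma npower_add_sub_npower {n : ℕ} (hn : 1 ≤ n) (b h : A) :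
    npower (· * ·) (b + h) n - npower (· * ·) b n = ∑ j ∈ Icc 1 n, powCoeff b h (n - 1) j := by
  have hexp := npow1_add_smul b h (1 : ℂ) (n - 1)
  simp only [one_pow, one_smul] at hexp
  rw [npower, npower, hexp, show n - 1 + 2 = n + 1 by omega, sum_range_succ',
    powCoeff_zero_right_eq_npow1, add_sub_cancel_right,
    range_eq_Ico, sum_Ico_add', zero_add, Ico_add_one_right_eq_Icc]

lemma hasPowSumRepr_npower_sub_npower {n : ℕ} (hn : 1 ≤ n) (a b : A) :
    HasPowSumRepr (· * ·) n (npower (· * ·) a n - npower (· * ·) b n)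
      ((n : ℝ) ^ n / n.factorial * ∑ j ∈ Icc 1 n, n.choose j * ‖b‖ ^ (n - j) * ‖a - b‖ ^ j) := by
  have hab : npower (· * ·) a n = npower (· * ·) (b + (a - b)) n := by rw [add_sub_cancel]
  rw [hab, npower_add_sub_npower hn, mul_sum]
  refine HasPowSumRepr.sum fun j hj => ?_
  obtain ⟨hj1, hjn⟩ := mem_Icc.1 hj
  rcases hjn.lt_or_eq with hjn | rfl
  · exact hasPowSumRepr_powCoeff hj1 hjn b (a - b)
  have htop : powCoeff b (a - b) (j - 1) j = npower (· * ·) (a - b) j := by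
    conv_lhs => rw [← Nat.sub_add_cancel hn]
    exact powCoeff_succ_self b (a - b) (j - 1)
  have hconst : (1 : ℝ) ≤ (j : ℝ) ^ j / j.factorial :=
    (one_le_div (by positivity)).2 (by exact_mod_cast Nat.factorial_le_pow j)
  rw [htop]
  refine (hasPowSumRepr_npower _).mono ?_
  simpa using le_mul_of_one_le_left (by positivity) hconst

end Estimate

theorem statement16_general (n : ℕ) (hn : 2 ≤ n)
    (A : Type*) [NonUnitalNormedRing A] [NormedSpace ℂ A] [IsScalarTower ℂ A A]
    [SMulCommClass ℂ A A] :
    (∀ a b : A,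
      npower (fun a b : A => a * b) a n - npower (fun a b : A => a * b) b n ∈
        PnSubmodule (fun a b : A => a * b) n ∧
      PnNorm (fun a b : A => a * b) n
          (npower (fun a b : A => a * b) a n - npower (fun a b : A => a * b) b n) ≤
        ((n : ℝ) ^ n / (n.factorial : ℝ)) *
          ∑ j ∈ Finset.Icc 1 n, (n.choose j : ℝ) * ‖b‖ ^ (n - j) * ‖a - b‖ ^ j) ∧
    -- in particular, `a ↦ aⁿ` is continuous from `A` to `(𝒫ₙ(A), ‖·‖_{𝒫ₙ})`:
    (∀ a : A, ∀ ε : ℝ, 0 < ε → ∃ δ : ℝ, 0 < δ ∧ ∀ b : A, ‖b - a‖ < δ →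
      PnNorm (fun a b : A => a * b) n
        (npower (fun a b : A => a * b) b n - npower (fun a b : A => a * b) a n) < ε) := by
  have hrepr (a b : A) := hasPowSumRepr_npower_sub_npower (by omega : 1 ≤ n) a b
  refine ⟨fun a b => ⟨(hrepr a b).mem_PnSubmodule, (hrepr a b).PnNorm_le⟩, fun a ε hε => ?_⟩
  set g : A → ℝ := fun b =>
    (n : ℝ) ^ n / n.factorial * ∑ j ∈ Icc 1 n, n.choose j * ‖a‖ ^ (n - j) * ‖b - a‖ ^ j
  have hga : g a = 0 := by
    simp only [g, sub_self, norm_zero]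
    rw [sum_eq_zero fun j hj => by rw [zero_pow (by grind), mul_zero], mul_zero]
  obtain ⟨δ, hδ, hgδ⟩ := Metric.continuousAt_iff.1 (by fun_prop : Continuous g).continuousAt ε hε
  refine ⟨δ, hδ, fun b hb => (hrepr b a).PnNorm_le.trans_lt ?_⟩
  have hgb := hgδ (by rwa [dist_eq_norm])
  rw [hga, Real.dist_eq, sub_zero] at hgb
  exact (le_abs_self _).trans_lt hgb

theorem statement16 (n : ℕ) (hn : 2 ≤ n)
    (A : Type*) [NonUnitalNormedRing A] [NormedSpace ℂ A] [IsScalarTower ℂ A A]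
    [SMulCommClass ℂ A A] [CompleteSpace A] :
    (∀ a b : A,
      npower (fun a b : A => a * b) a n - npower (fun a b : A => a * b) b n ∈
        PnSubmodule (fun a b : A => a * b) n ∧
      PnNorm (fun a b : A => a * b) n
          (npower (fun a b : A => a * b) a n - npower (fun a b : A => a * b) b n) ≤
        ((n : ℝ) ^ n / (n.factorial : ℝ)) *
          ∑ j ∈ Finset.Icc 1 n, (n.choose j : ℝ) * ‖b‖ ^ (n - j) * ‖a - b‖ ^ j) ∧
    -- in particular, `a ↦ aⁿ` is continuous from `A` to `(𝒫ₙ(A), ‖·‖_{𝒫ₙ})`: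
    (∀ a : A, ∀ ε : ℝ, 0 < ε → ∃ δ : ℝ, 0 < δ ∧ ∀ b : A, ‖b - a‖ < δ →
      PnNorm (fun a b : A => a * b) n
        (npower (fun a b : A => a * b) b n - npower (fun a b : A => a * b) a n) < ε) :=
  statement16_general n hn A

end
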